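/- arXiv:2408.12513 — 4 statements merged into one kernel-verified Lean document; each statement's English description precedes it below -/
import Mathlib

section
/- For a non-negative monotone submodular function f on subsets of a finite ground set V, if {S_i} are the sets produced by greedy selection (S_0 = ∅ and S_i = S_{i-1} ∪ {e_i} where e_i maximizes the marginal gain f(S_{i-1} ∪ {e}) − f(S_{i-1})), then for all positive integers ℓ and k, f(S_ℓ) ≥ (1 − e^{−ℓ/k}) · max{f(S) : |S| ≤ k}. -/
/-!
If `T` has at most `k` elements, submodularity bounds the gap `f T - f A` by the sum of the
marginal gains over `T \ A` at `A`, hence by `k` times the greedy gain at `A`. So each greedy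
step closes at least a `1/k` fraction of the gap to `f T`, the gap after `ℓ` steps is at most
`(1 - 1/k)^ℓ f T ≤ e^{-ℓ/k} f T`, and the claim follows.
-/

open Finset

section

variable {V : Type*} [DecidableEq V]

def marginalGain (f : Finset V → ℝ) (A : Finset V) (e : V) : ℝ := f (insert e A) - f A

def IsSubmodular (f : Finset V → ℝ) : Prop :=
  ∀ A B : Finset V, A ⊆ B → ∀ e ∉ B, marginalGain f B e ≤ marginalGain f A e

theorem marginalGain_nonneg {f : Finset V → ℝ} (hmono : Monotone f) (A : Finset V) (e : V) :
    0 ≤ marginalGain f A e :=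
  sub_nonneg.2 (hmono (subset_insert e A))

namespace IsSubmodular

variable {f : Finset V → ℝ}

theorem sub_le_sum_marginalGain_of_disjoint (hf : IsSubmodular f) {A B : Finset V}
    (hAB : Disjoint A B) : f (A ∪ B) - f A ≤ ∑ e ∈ B, marginalGain f A e := by
  induction B using Finset.induction_on with
  | empty => simp
  | insert b B hbB ih =>
    rw [disjoint_insert_right] at hAB
    have hb : b ∉ A ∪ B := by simp [hAB.1, hbB]
    have step := hf A (A ∪ B) subset_union_left b hb
    rw [union_insert, sum_insert hbB]
    have ih := ih hAB.2
    unfold marginalGain at step ih ⊢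
    linarith

theorem sub_le_sum_marginalGain (hf : IsSubmodular f) (A B : Finset V) :
    f (A ∪ B) - f A ≤ ∑ e ∈ B \ A, marginalGain f A e := by
  simpa [union_sdiff_self_eq_union] using
    hf.sub_le_sum_marginalGain_of_disjoint (disjoint_sdiff (s := A) (t := B))

theorem sub_le_card_mul_marginalGain_of_isMax (hf : IsSubmodular f) (hmono : Monotone f)
    {A T : Finset V} {e : V} (hmax : ∀ e', marginalGain f A e' ≤ marginalGain f A e) :
    f T - f A ≤ #T * marginalGain f A e := by
  have hcard : (#(T \ A) : ℝ) ≤ #T := by exact_mod_cast card_le_card sdiff_subset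
  calc f T - f A ≤ f (A ∪ T) - f A := by gcongr; exact hmono subset_union_right
    _ ≤ ∑ e' ∈ T \ A, marginalGain f A e' := hf.sub_le_sum_marginalGain A T
    _ ≤ ∑ _e' ∈ T \ A, marginalGain f A e := sum_le_sum fun e' _ ↦ hmax e'
    _ = #(T \ A) * marginalGain f A e := by rw [sum_const, nsmul_eq_mul]
    _ ≤ #T * marginalGain f A e := by gcongr; exact marginalGain_nonneg hmono A e

/-- For `k = 0` the factor is `1` since `(0 : ℝ)⁻¹ = 0`. -/
theorem sub_insert_le_of_isMax (hf : IsSubmodular f) (hmono : Monotone f)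
    {A T : Finset V} {e : V} {k : ℕ} (hT : #T ≤ k)
    (hmax : ∀ e', marginalGain f A e' ≤ marginalGain f A e) :
    f T - f (insert e A) ≤ (1 - (k : ℝ)⁻¹) * (f T - f A) := by
  have hgain := marginalGain_nonneg hmono A e
  have hTk : (#T : ℝ) ≤ k := by exact_mod_cast hT
  have hgap : f T - f A ≤ k * marginalGain f A e :=
    (hf.sub_le_card_mul_marginalGain_of_isMax hmono hmax).trans (by gcongr)
  have hfrac : (f T - f A) / k ≤ marginalGain f A e :=
    div_le_of_le_mul₀ k.cast_nonneg hgain (by rwa [mul_comm])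
  unfold marginalGain at hfrac
  rw [one_sub_mul, ← div_eq_inv_mul]
  linarith

end IsSubmodular

end

theorem one_sub_inv_pow_le_exp (k ℓ : ℕ) : (1 - (k : ℝ)⁻¹) ^ ℓ ≤ Real.exp (-(ℓ : ℝ) / k) := by
  calc (1 - (k : ℝ)⁻¹) ^ ℓ ≤ Real.exp (-(k : ℝ)⁻¹) ^ ℓ := by
        gcongr
        · exact sub_nonneg.2 k.cast_inv_le_one
        · linarith [Real.add_one_le_exp (-(k : ℝ)⁻¹)]
    _ = Real.exp (-(ℓ : ℝ) / k) := by rw [← Real.exp_nat_mul]; ring_nf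

theorem greedy_submodular_bound_general {V : Type*} [DecidableEq V]
    (f : Finset V → ℝ)
    (hnn : ∀ A : Finset V, 0 ≤ f A)
    (hmono : ∀ A B : Finset V, A ⊆ B → f A ≤ f B)
    (hsub : ∀ A B : Finset V, A ⊆ B → ∀ e ∉ B,
      f (insert e B) - f B ≤ f (insert e A) - f A)
    (S : ℕ → Finset V)
    (hS0 : S 0 = ∅)
    (hgreedy : ∀ i, ∃ e : V, S (i + 1) = insert e (S i) ∧
      ∀ e' : V, f (insert e' (S i)) - f (S i) ≤ f (insert e (S i)) - f (S i))
    (ℓ k : ℕ) :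
    ∀ T : Finset V, T.card ≤ k →
      (1 - Real.exp (-(ℓ : ℝ) / k)) * f T ≤ f (S ℓ) := by
  intro T hT
  have hsub : IsSubmodular f := hsub
  have hmono : Monotone f := fun A B ↦ hmono A B
  have hstep : ∀ i, f T - f (S (i + 1)) ≤ (1 - (k : ℝ)⁻¹) * (f T - f (S i)) := fun i ↦ by
    obtain ⟨e, hSe, hmax⟩ := hgreedy i
    rw [hSe]
    exact hsub.sub_insert_le_of_isMax hmono hT hmax
  have hc : 0 ≤ 1 - (k : ℝ)⁻¹ := sub_nonneg.2 k.cast_inv_le_one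
  have hgap : f T - f (S ℓ) ≤ (1 - (k : ℝ)⁻¹) ^ ℓ * f T :=
    calc f T - f (S ℓ) ≤ (1 - (k : ℝ)⁻¹) ^ ℓ * (f T - f (S 0)) :=
          le_geom (u := fun i ↦ f T - f (S i)) hc ℓ fun i _ ↦ hstep i
      _ ≤ (1 - (k : ℝ)⁻¹) ^ ℓ * f T := by
          gcongr
          rw [hS0]
          linarith [hnn ∅]
  linarith [mul_le_mul_of_nonneg_right (one_sub_inv_pow_le_exp k ℓ) (hnn T)]

/-- Nemhauser–Wolsey–Fisher: greedy guarantee `f(S_ℓ) ≥ (1 - e^{-ℓ/k})·max{f(S) : |S| ≤ k}`. -/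
theorem greedy_submodular_bound {V : Type*} [Fintype V] [DecidableEq V]
    (f : Finset V → ℝ)
    (hnn : ∀ A : Finset V, 0 ≤ f A)
    (hmono : ∀ A B : Finset V, A ⊆ B → f A ≤ f B)
    (hsub : ∀ A B : Finset V, A ⊆ B → ∀ e ∉ B,
      f (insert e B) - f B ≤ f (insert e A) - f A)
    (S : ℕ → Finset V)
    (hS0 : S 0 = ∅)
    (hgreedy : ∀ i, ∃ e : V, S (i + 1) = insert e (S i) ∧
      ∀ e' : V, f (insert e' (S i)) - f (S i) ≤ f (insert e (S i)) - f (S i))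
    (ℓ k : ℕ) (hℓ : 0 < ℓ) (hk : 0 < k) :
    ∀ T : Finset V, T.card ≤ k →
      (1 - Real.exp (-(ℓ : ℝ) / k)) * f T ≤ f (S ℓ) :=
  greedy_submodular_bound_general f hnn hmono hsub S hS0 hgreedy ℓ k
end

section
/- For a non-negative monotone submodular function f and the greedy sequence {S_i}, taking ℓ = k gives f(S_k) ≥ (1 − 1/e) · max{f(S) : |S| ≤ k}. -/
private lemma marg_sum {V : Type*} [DecidableEq V]
    (f : Finset V → ℝ)
    (hmono : ∀ A B : Finset V, A ⊆ B → f A ≤ f B)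
    (hsub : ∀ A B : Finset V, A ⊆ B → ∀ e ∉ B,
      f (insert e B) - f B ≤ f (insert e A) - f A)
    (A : Finset V) :
    ∀ T : Finset V, f (A ∪ T) ≤ f A + ∑ e ∈ T, (f (insert e A) - f A) := by
  intro T
  induction T using Finset.induction_on with
  | empty => simp
  | @insert e T hnot ih =>
    rw [Finset.sum_insert hnot]
    have h1 : A ∪ insert e T = insert e (A ∪ T) := by
      ext x; simp [or_left_comm, or_comm]
    rw [h1]
    have h2 : f (insert e (A ∪ T)) - f (A ∪ T) ≤ f (insert e A) - f A := by
      by_cases he : e ∈ A ∪ T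
      · rw [Finset.insert_eq_self.mpr he]
        have := hmono A (insert e A) (Finset.subset_insert _ _)
        linarith
      · exact hsub A (A ∪ T) Finset.subset_union_left e he
    linarith

/-- The special case ℓ = k of the greedy guarantee: `f(S_k) ≥ (1 - 1/e)·max{f(S) : |S| ≤ k}`. -/
theorem greedy_submodular_one_sub_inv_e {V : Type*} [Fintype V] [DecidableEq V]
    (f : Finset V → ℝ)
    (hnn : ∀ A : Finset V, 0 ≤ f A)
    (hmono : ∀ A B : Finset V, A ⊆ B → f A ≤ f B)
    (hsub : ∀ A B : Finset V, A ⊆ B → ∀ e ∉ B,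
      f (insert e B) - f B ≤ f (insert e A) - f A)
    (S : ℕ → Finset V)
    (hS0 : S 0 = ∅)
    (hgreedy : ∀ i, ∃ e : V, S (i + 1) = insert e (S i) ∧
      ∀ e' : V, f (insert e' (S i)) - f (S i) ≤ f (insert e (S i)) - f (S i))
    (k : ℕ) (hk : 0 < k) :
    ∀ T : Finset V, T.card ≤ k →
      (1 - 1 / Real.exp 1) * f T ≤ f (S k) := by
  intro T hT
  have hkR : (0 : ℝ) < (k : ℝ) := by exact_mod_cast hk
  -- per-step bound
  have step : ∀ i, f T - f (S i) ≤ (k : ℝ) * (f (S (i + 1)) - f (S i)) := by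
    intro i
    obtain ⟨e, hSe, hmax⟩ := hgreedy i
    set Δ : ℝ := f (S (i + 1)) - f (S i) with hΔ
    have hΔ0 : 0 ≤ Δ := by
      have := hmono (S i) (insert e (S i)) (Finset.subset_insert _ _)
      rw [hΔ, hSe]; linarith
    have h1 : f T ≤ f (S i ∪ T) :=
      hmono T (S i ∪ T) Finset.subset_union_right
    have h2 := marg_sum f hmono hsub (S i) T
    have h3 : ∑ e' ∈ T, (f (insert e' (S i)) - f (S i)) ≤ ∑ _e' ∈ T, Δ := by
      apply Finset.sum_le_sum
      intro e' _
      rw [hΔ, hSe]; exact hmax e'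
    rw [Finset.sum_const, nsmul_eq_mul] at h3
    have h4 : (T.card : ℝ) * Δ ≤ (k : ℝ) * Δ := by
      apply mul_le_mul_of_nonneg_right _ hΔ0
      exact_mod_cast hT
    linarith
  -- geometric decay
  have geo : ∀ i, f T - f (S i) ≤ (1 - 1 / (k : ℝ)) ^ i * f T := by
    intro i
    induction i with
    | zero => simp [hS0]; linarith [hnn (∅ : Finset V)]
    | succ i ih =>
      have hstep := step i
      have hc : (0 : ℝ) ≤ 1 - 1 / (k : ℝ) := by
        have h1 : (1 : ℝ) / k ≤ 1 := by
          rw [div_le_one hkR]; exact_mod_cast hk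
        linarith
      have key : f T - f (S (i + 1)) ≤ (1 - 1 / (k : ℝ)) * (f T - f (S i)) := by
        have h2 : (f T - f (S i)) / (k : ℝ) ≤ f (S (i + 1)) - f (S i) := by
          rw [div_le_iff₀ hkR]; linarith
        have h3 : (1 - 1 / (k : ℝ)) * (f T - f (S i))
            = (f T - f (S i)) - (f T - f (S i)) / (k : ℝ) := by ring
        linarith
      calc f T - f (S (i + 1)) ≤ (1 - 1 / (k : ℝ)) * (f T - f (S i)) := key
        _ ≤ (1 - 1 / (k : ℝ)) * ((1 - 1 / (k : ℝ)) ^ i * f T) :=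
            mul_le_mul_of_nonneg_left ih hc
        _ = (1 - 1 / (k : ℝ)) ^ (i + 1) * f T := by ring
  -- (1 - 1/k)^k ≤ e⁻¹
  have hc : (0 : ℝ) ≤ 1 - 1 / (k : ℝ) := by
    have h1 : (1 : ℝ) / k ≤ 1 := by
      rw [div_le_one hkR]; exact_mod_cast hk
    linarith
  have hexp : (1 - 1 / (k : ℝ)) ^ k ≤ (Real.exp 1)⁻¹ := by
    have h1 : 1 - 1 / (k : ℝ) ≤ Real.exp (-(1 / (k : ℝ))) := by
      have := Real.add_one_le_exp (-(1 / (k : ℝ)))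
      linarith
    calc (1 - 1 / (k : ℝ)) ^ k ≤ Real.exp (-(1 / (k : ℝ))) ^ k :=
          pow_le_pow_left₀ hc h1 k
      _ = Real.exp ((k : ℝ) * (-(1 / (k : ℝ)))) := (Real.exp_nat_mul _ k).symm
      _ = Real.exp (-1) := by
          congr 1
          field_simp
      _ = (Real.exp 1)⁻¹ := Real.exp_neg 1
  have := geo k
  have hfT : 0 ≤ f T := hnn T
  have h5 : (1 - 1 / (k : ℝ)) ^ k * f T ≤ (Real.exp 1)⁻¹ * f T :=
    mul_le_mul_of_nonneg_right hexp hfT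
  have h7 : f T - f (S k) ≤ (Real.exp 1)⁻¹ * f T := le_trans this h5
  have h6 : (1 - 1 / Real.exp 1) * f T = f T - (Real.exp 1)⁻¹ * f T := by
    rw [one_div]; ring
  linarith [h6, h7]
end

section
/- Let f be a monotone submodular function on subsets of a finite set V with f(∅) = 0, let OPT = max{f(S) : |S| ≤ k}, and let {S_i} be the greedy sequence. Then for each i ≥ 0, OPT − f(S_{i+1}) ≤ (1 − 1/k)(OPT − f(S_i)). -/
lemma greedy_aux {V : Type*} [DecidableEq V]
    (f : Finset V → ℝ)
    (hsub : ∀ A B : Finset V, A ⊆ B → ∀ e ∉ B,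
      f (insert e B) - f B ≤ f (insert e A) - f A) :
    ∀ (D A : Finset V), Disjoint D A →
      f (A ∪ D) - f A ≤ ∑ e ∈ D, (f (insert e A) - f A) := by
  intro D
  induction D using Finset.induction_on with
  | empty => intro A _; simp
  | @insert a D ha ih =>
    intro A hdisj
    have hdisj' : Disjoint D A := (Finset.disjoint_insert_left.mp hdisj).2
    have haA : a ∉ A := (Finset.disjoint_insert_left.mp hdisj).1
    have haAD : a ∉ A ∪ D := by
      simp [haA, ha]
    have h1 : f (insert a (A ∪ D)) - f (A ∪ D) ≤ f (insert a A) - f A :=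
      hsub A (A ∪ D) Finset.subset_union_left a haAD
    have h2 := ih A hdisj'
    have heq : A ∪ insert a D = insert a (A ∪ D) := by
      ext x; simp [or_comm, or_left_comm]
    rw [Finset.sum_insert ha, heq]
    linarith

/-- Per-step contraction of the greedy gap: `OPT - f(S_{i+1}) ≤ (1 - 1/k)(OPT - f(S_i))`. -/
theorem greedy_gap_contraction {V : Type*} [Fintype V] [DecidableEq V]
    (f : Finset V → ℝ)
    (hmono : ∀ A B : Finset V, A ⊆ B → f A ≤ f B)
    (hsub : ∀ A B : Finset V, A ⊆ B → ∀ e ∉ B,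
      f (insert e B) - f B ≤ f (insert e A) - f A)
    (hempty : f ∅ = 0)
    (k : ℕ) (hk : 0 < k)
    (OPT : ℝ)
    (hOPT : IsGreatest {x : ℝ | ∃ T : Finset V, T.card ≤ k ∧ f T = x} OPT)
    (S : ℕ → Finset V)
    (hS0 : S 0 = ∅)
    (hgreedy : ∀ i, ∃ e : V, S (i + 1) = insert e (S i) ∧
      ∀ e' : V, f (insert e' (S i)) - f (S i) ≤ f (insert e (S i)) - f (S i)) :
    ∀ i : ℕ, OPT - f (S (i + 1)) ≤ (1 - 1 / (k : ℝ)) * (OPT - f (S i)) := by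
  intro i
  obtain ⟨T, hTk, hTf⟩ := hOPT.1
  obtain ⟨e, hSe, hmax⟩ := hgreedy i
  set A := S i with hA
  set g := f (S (i + 1)) - f A with hg
  have hk' : (0 : ℝ) < k := Nat.cast_pos.mpr hk
  have hgnonneg : 0 ≤ g := by
    have := hmono A (S (i + 1)) (by rw [hSe]; exact Finset.subset_insert _ _)
    linarith
  -- OPT - f A ≤ k * g
  have hdisj : Disjoint (T \ A) A := Finset.sdiff_disjoint
  have h1 : f T ≤ f (A ∪ (T \ A)) := hmono _ _ (by
    intro x hx
    by_cases hxA : x ∈ A <;> simp [hxA, hx])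
  have h2 := greedy_aux f hsub (T \ A) A hdisj
  have h3 : ∑ e' ∈ T \ A, (f (insert e' A) - f A) ≤ ∑ _e' ∈ T \ A, g := by
    apply Finset.sum_le_sum
    intro x _
    have := hmax x
    rw [hSe] at hg
    linarith
  have h4 : ∑ _e' ∈ T \ A, g = ((T \ A).card : ℝ) * g := by
    rw [Finset.sum_const, nsmul_eq_mul]
  have hcard : ((T \ A).card : ℝ) ≤ (k : ℝ) := by
    have : (T \ A).card ≤ T.card := Finset.card_le_card (Finset.sdiff_subset)
    exact_mod_cast le_trans this hTk
  have h5 : ((T \ A).card : ℝ) * g ≤ (k : ℝ) * g := by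
    exact mul_le_mul_of_nonneg_right hcard hgnonneg
  have key : OPT - f A ≤ (k : ℝ) * g := by
    rw [← hTf]; rw [h4] at h3; linarith
  have hdiv : (OPT - f A) / k ≤ g := (div_le_iff₀ hk').mpr (by linarith [key])
  have expand : (1 - 1 / (k : ℝ)) * (OPT - f A) = (OPT - f A) - (OPT - f A) / k := by
    field_simp
  rw [expand]
  have : f (S (i + 1)) = f A + g := by rw [hg]; ring
  linarith
end

section
/- For a non-negative monotone submodular function f, the greedy sequence satisfies f(S_{i+1}) − f(S_i) ≥ f(S_i ∪ S*) − f(S_i))/k ≥ (f(S*) − f(S_i))/k, where S* is any set of size at most k. -/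
lemma greedy_union_sum_bound {V : Type*} [Fintype V] [DecidableEq V]
    (f : Finset V → ℝ)
    (hmono : ∀ A B : Finset V, A ⊆ B → f A ≤ f B)
    (hsub : ∀ A B : Finset V, A ⊆ B → ∀ e ∉ B,
      f (insert e B) - f B ≤ f (insert e A) - f A)
    (A T : Finset V) :
    f (A ∪ T) - f A ≤ ∑ e ∈ T, (f (insert e A) - f A) := by
  induction T using Finset.induction with
  | empty => simp
  | @insert x T' hx ih =>
    rw [Finset.sum_insert hx, Finset.union_insert]
    by_cases hxAT : x ∈ A ∪ T'
    · rw [Finset.insert_eq_self.2 hxAT]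
      have h0 : f A ≤ f (insert x A) := hmono _ _ (Finset.subset_insert _ _)
      linarith
    · have h := hsub A (A ∪ T') Finset.subset_union_left x hxAT
      linarith

/-- The greedy step gain dominates `(f(S_i ∪ S*) - f(S_i))/k ≥ (f(S*) - f(S_i))/k`. -/
theorem greedy_step_gain_bound {V : Type*} [Fintype V] [DecidableEq V]
    (f : Finset V → ℝ)
    (hnn : ∀ A : Finset V, 0 ≤ f A)
    (hmono : ∀ A B : Finset V, A ⊆ B → f A ≤ f B)
    (hsub : ∀ A B : Finset V, A ⊆ B → ∀ e ∉ B,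
      f (insert e B) - f B ≤ f (insert e A) - f A)
    (k : ℕ) (hk : 0 < k)
    (Sstar : Finset V) (hcard : Sstar.card ≤ k)
    (S : ℕ → Finset V)
    (hS0 : S 0 = ∅)
    (hgreedy : ∀ i, ∃ e : V, S (i + 1) = insert e (S i) ∧
      ∀ e' : V, f (insert e' (S i)) - f (S i) ≤ f (insert e (S i)) - f (S i)) :
    ∀ i : ℕ,
      (f Sstar - f (S i)) / k ≤ (f (S i ∪ Sstar) - f (S i)) / k ∧
      (f (S i ∪ Sstar) - f (S i)) / k ≤ f (S (i + 1)) - f (S i) := by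
  intro i
  obtain ⟨e, heq, hmax⟩ := hgreedy i
  have hkpos : (0:ℝ) < k := by exact_mod_cast hk
  have hgain : 0 ≤ f (insert e (S i)) - f (S i) := by
    have := hmono (S i) (insert e (S i)) (Finset.subset_insert _ _); linarith
  constructor
  · have := hmono Sstar (S i ∪ Sstar) Finset.subset_union_right
    gcongr
  · have hsum := greedy_union_sum_bound f hmono hsub (S i) Sstar
    have hsum2 : ∑ x ∈ Sstar, (f (insert x (S i)) - f (S i)) ≤
        Sstar.card * (f (insert e (S i)) - f (S i)) := by
      calc ∑ x ∈ Sstar, (f (insert x (S i)) - f (S i))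
          ≤ ∑ _x ∈ Sstar, (f (insert e (S i)) - f (S i)) :=
            Finset.sum_le_sum fun x _ => hmax x
        _ = Sstar.card * (f (insert e (S i)) - f (S i)) := by
            rw [Finset.sum_const, nsmul_eq_mul]
    have hck : (Sstar.card : ℝ) ≤ k := by exact_mod_cast hcard
    have hle : f (S i ∪ Sstar) - f (S i) ≤ k * (f (insert e (S i)) - f (S i)) := by
      have := mul_le_mul_of_nonneg_right hck hgain
      linarith
    rw [heq, div_le_iff₀ hkpos]
    linarith
end
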